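/- arXiv:2512.14301 — 4 statements merged into one kernel-verified Lean document; each statement's English description precedes it below -/
import Mathlib

section
/- Suppose λ : ℕ → ℝ (indexed from 1) is a strictly increasing sequence of the form λ_j = (π²/B²)·j² + a₀ + α(j) for all j ≥ 1, where B > 0 and a₀ ∈ ℝ are constants and α : ℕ → ℝ satisfies |α(j)| ≤ C·j⁻² for all j ≥ 1 and some constant C > 0. Then there exist constants 0 < υ ≤ Υ such that for all integers 1 ≤ n ≤ m, υ·(m² − n²) ≤ λ_m − λ_n ≤ Υ·(m² − n²). -/
/-!
Write `λ_j = K j² + a₀ + e_j` with `K = π²/B² > 0` and `|e_j| ≤ M`. Then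
`λ_m - λ_n` differs from `K (m² - n²)` by at most `2M`, and `m² - n² ≥ m ≥ 1` for `n < m`.
This gives the upper bound with `Υ = K + 2M`, and the lower bound with `υ = K/2` as soon as
`m > 4M/K`. The finitely many pairs with `m ≤ 4M/K` are handled by strict monotonicity alone.
-/

open Filter Finset Topology

lemma Nat.cast_le_sq_sub_sq {n m : ℕ} (h : n < m) : (m : ℝ) ≤ (m : ℝ) ^ 2 - (n : ℝ) ^ 2 := by
  have h' : (n : ℝ) + 1 ≤ m := by exact_mod_cast h
  nlinarith [(n.cast_nonneg : (0 : ℝ) ≤ n)]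

section QuadraticGap

variable {lam : ℕ → ℝ}

lemma StrictMonoOn.exists_pos_mul_sq_sub_sq_le (hmono : StrictMonoOn lam (Set.Ici 1)) (N : ℕ) :
    ∃ ε > 0, ∀ n m : ℕ, 1 ≤ n → n ≤ m → m ≤ N →
      ε * ((m : ℝ) ^ 2 - (n : ℝ) ^ 2) ≤ lam m - lam n := by
  have hev : ∀ᶠ ε in 𝓝 (0 : ℝ), ∀ p ∈ range (N + 1) ×ˢ range (N + 1), 1 ≤ p.1 → p.1 ≤ p.2 →
      ε * ((p.2 : ℝ) ^ 2 - (p.1 : ℝ) ^ 2) ≤ lam p.2 - lam p.1 := by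
    refine (eventually_all_finset _).2 fun ⟨n, m⟩ _ => ?_
    by_cases h : 1 ≤ n ∧ n < m
    · have hgap : 0 < lam m - lam n :=
        sub_pos.2 (hmono (Set.mem_Ici.2 h.1) (Set.mem_Ici.2 (h.1.trans h.2.le)) h.2)
      have hlim : Tendsto (fun ε : ℝ => ε * ((m : ℝ) ^ 2 - (n : ℝ) ^ 2)) (𝓝 0) (𝓝 0) := by
        simpa using (continuous_mul_const ((m : ℝ) ^ 2 - (n : ℝ) ^ 2)).tendsto 0
      filter_upwards [hlim.eventually (gt_mem_nhds hgap)] with ε hε _ _ using hε.le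
    · filter_upwards with ε hn hnm
      obtain rfl : n = m := by omega
      simp
  obtain ⟨ε, hε, hpos⟩ := ((hev.filter_mono nhdsWithin_le_nhds).and
    (self_mem_nhdsWithin : Set.Ioi (0 : ℝ) ∈ 𝓝[>] 0)).exists
  refine ⟨ε, hpos, fun n m hn hnm hmN => hε (n, m) ?_ hn hnm⟩
  simp only [mem_product, mem_range]
  omega

variable {K a₀ M : ℝ} (hlam : ∀ j : ℕ, 1 ≤ j → |lam j - K * (j : ℝ) ^ 2 - a₀| ≤ M)
include hlam

lemma abs_sub_sub_mul_sq_sub_sq_le {n m : ℕ} (hn : 1 ≤ n) (hm : 1 ≤ m) :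
    |lam m - lam n - K * ((m : ℝ) ^ 2 - (n : ℝ) ^ 2)| ≤ 2 * M := by
  have key : lam m - lam n - K * ((m : ℝ) ^ 2 - (n : ℝ) ^ 2)
      = (lam m - K * (m : ℝ) ^ 2 - a₀) - (lam n - K * (n : ℝ) ^ 2 - a₀) := by ring
  rw [key, two_mul]
  exact (abs_sub _ _).trans (add_le_add (hlam m hm) (hlam n hn))

lemma exists_quadratic_gap_bounds (hK : 0 < K) (hmono : StrictMonoOn lam (Set.Ici 1)) :
    ∃ υ Υ : ℝ, 0 < υ ∧ υ ≤ Υ ∧ ∀ n m : ℕ, 1 ≤ n → n ≤ m →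
      υ * ((m : ℝ) ^ 2 - (n : ℝ) ^ 2) ≤ lam m - lam n ∧
      lam m - lam n ≤ Υ * ((m : ℝ) ^ 2 - (n : ℝ) ^ 2) := by
  have hM : 0 ≤ M := (abs_nonneg _).trans (hlam 1 le_rfl)
  obtain ⟨N, hN⟩ := exists_nat_ge (4 * M / K)
  obtain ⟨ε, hε, hnear⟩ := hmono.exists_pos_mul_sq_sub_sq_le N
  refine ⟨min (K / 2) ε, K + 2 * M, lt_min (half_pos hK) hε,
    (min_le_left _ _).trans (by linarith), fun n m hn hnm => ?_⟩
  obtain rfl | hlt := hnm.eq_or_lt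
  · simp
  have hd : (m : ℝ) ≤ (m : ℝ) ^ 2 - (n : ℝ) ^ 2 := Nat.cast_le_sq_sub_sq hlt
  have hm1 : (1 : ℝ) ≤ m := by exact_mod_cast hn.trans hnm
  have herr := abs_le.1 (abs_sub_sub_mul_sq_sub_sq_le hlam hn (hn.trans hnm))
  refine ⟨?_, by nlinarith⟩
  by_cases hmN : m ≤ N
  · exact (mul_le_mul_of_nonneg_right (min_le_right _ _) (by linarith)).trans
      (hnear n m hn hnm hmN)
  · have hfar : 4 * M ≤ K * ((m : ℝ) ^ 2 - (n : ℝ) ^ 2) := by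
      have : (N : ℝ) < m := by exact_mod_cast not_le.1 hmN
      nlinarith [(div_le_iff₀ hK).1 hN]
    have hυ := mul_le_mul_of_nonneg_right (min_le_left (K / 2) ε)
      (by linarith : (0 : ℝ) ≤ (m : ℝ) ^ 2 - (n : ℝ) ^ 2)
    linarith

end QuadraticGap

theorem stmt0_general (lam α : ℕ → ℝ) (B a₀ C : ℝ)
    (hB : 0 < B)
    (hα : ∀ j : ℕ, 1 ≤ j → |α j| ≤ C / (j : ℝ) ^ 2)
    (hlam : ∀ j : ℕ, 1 ≤ j →
      lam j = Real.pi ^ 2 / B ^ 2 * (j : ℝ) ^ 2 + a₀ + α j)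
    (hmono : ∀ n m : ℕ, 1 ≤ n → n < m → lam n < lam m) :
    ∃ υ Υ : ℝ, 0 < υ ∧ υ ≤ Υ ∧
      ∀ n m : ℕ, 1 ≤ n → n ≤ m →
        υ * ((m : ℝ) ^ 2 - (n : ℝ) ^ 2) ≤ lam m - lam n ∧
        lam m - lam n ≤ Υ * ((m : ℝ) ^ 2 - (n : ℝ) ^ 2) := by
  have hC : 0 ≤ C := by simpa using (abs_nonneg _).trans (hα 1 le_rfl)
  have hpert : ∀ j : ℕ, 1 ≤ j → |lam j - Real.pi ^ 2 / B ^ 2 * (j : ℝ) ^ 2 - a₀| ≤ C := by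
    intro j hj
    have hj2 : (1 : ℝ) ≤ (j : ℝ) ^ 2 := one_le_pow₀ (by exact_mod_cast hj)
    have hα_eq : lam j - Real.pi ^ 2 / B ^ 2 * (j : ℝ) ^ 2 - a₀ = α j := by
      rw [hlam j hj]; ring
    rw [hα_eq]
    exact (hα j hj).trans (div_le_self hC hj2)
  exact exists_quadratic_gap_bounds hpert (by positivity)
    fun n hn m _ hnm => hmono n m hn hnm

theorem stmt0 (lam α : ℕ → ℝ) (B a₀ C : ℝ)
    (hB : 0 < B) (hC : 0 < C)
    (hα : ∀ j : ℕ, 1 ≤ j → |α j| ≤ C / (j : ℝ) ^ 2)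
    (hlam : ∀ j : ℕ, 1 ≤ j →
      lam j = Real.pi ^ 2 / B ^ 2 * (j : ℝ) ^ 2 + a₀ + α j)
    (hmono : ∀ n m : ℕ, 1 ≤ n → n < m → lam n < lam m) :
    ∃ υ Υ : ℝ, 0 < υ ∧ υ ≤ Υ ∧
      ∀ n m : ℕ, 1 ≤ n → n ≤ m →
        υ * ((m : ℝ) ^ 2 - (n : ℝ) ^ 2) ≤ lam m - lam n ∧
        lam m - lam n ≤ Υ * ((m : ℝ) ^ 2 - (n : ℝ) ^ 2) :=
  stmt0_general lam α B a₀ C hB hα hlam hmono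
end

section
/- Fix Δ > 0, η ∈ (0,1), and N₂ ∈ ℕ. Then there exist constants γ_y > 0, γ_λ > 0, Γ > 0 (with Γ depending only on η and υ) and N₀ ∈ ℕ such that for every N₁ ≥ N₀ and every n ∈ {1,…,⌊η·N₁⌋}: |𝒦_y(n)| ≤ γ_y·exp(−Γ·Δ·N₁³) and |𝒦_λ(n)| ≤ γ_λ·exp(−Γ·Δ·N₁³). -/
/-- The nodes `φ_n = exp(-Δ·λ_n)`. -/
noncomputable def phi (lam : ℕ → ℝ) (Δ : ℝ) (n : ℕ) : ℝ := Real.exp (-Δ * lam n)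

/-- Lagrange basis polynomial `L_n(z)` on the nodes `φ_1, …, φ_{N₁}`. -/
noncomputable def Lag (lam : ℕ → ℝ) (Δ : ℝ) (N₁ n : ℕ) (z : ℝ) : ℝ :=
  ∏ j ∈ (Finset.Icc 1 N₁).erase n, (z - phi lam Δ j) / (phi lam Δ n - phi lam Δ j)

/-- `L_n'(φ_n) = Σ_{k ≤ N₁, k ≠ n} 1/(φ_n − φ_k)`. -/
noncomputable def LagD (lam : ℕ → ℝ) (Δ : ℝ) (N₁ n : ℕ) : ℝ :=
  ∑ k ∈ (Finset.Icc 1 N₁).erase n, 1 / (phi lam Δ n - phi lam Δ k)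

/-- Hermite basis polynomial `H_n(z) = (1 − 2(z − φ_n)L_n'(φ_n))·L_n(z)²`. -/
noncomputable def HermH (lam : ℕ → ℝ) (Δ : ℝ) (N₁ n : ℕ) (z : ℝ) : ℝ :=
  (1 - 2 * (z - phi lam Δ n) * LagD lam Δ N₁ n) * (Lag lam Δ N₁ n z) ^ 2

/-- Hermite basis polynomial `H̃_n(z) = (z − φ_n)·L_n(z)²`. -/
noncomputable def HermHt (lam : ℕ → ℝ) (Δ : ℝ) (N₁ n : ℕ) (z : ℝ) : ℝ :=
  (z - phi lam Δ n) * (Lag lam Δ N₁ n z) ^ 2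

/-- First-order condition number for the amplitudes:
`𝒦_y(n) = Σ_{m=N₁+1}^{N₁+N₂} y_m·H_n(φ_m)`. -/
noncomputable def Ky (lam y : ℕ → ℝ) (Δ : ℝ) (N₁ N₂ n : ℕ) : ℝ :=
  ∑ m ∈ Finset.Icc (N₁ + 1) (N₁ + N₂), y m * HermH lam Δ N₁ n (phi lam Δ m)

/-- First-order condition number for the exponents:
`𝒦_λ(n) = −(Δ·y_n·φ_n)⁻¹·Σ_{m=N₁+1}^{N₁+N₂} y_m·H̃_n(φ_m)`. -/
noncomputable def Kl (lam y : ℕ → ℝ) (Δ : ℝ) (N₁ N₂ n : ℕ) : ℝ :=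
  -(Δ * y n * phi lam Δ n)⁻¹ *
    ∑ m ∈ Finset.Icc (N₁ + 1) (N₁ + N₂), y m * HermHt lam Δ N₁ n (phi lam Δ m)

/-!
The gap condition makes the nodes decay like a Gaussian, `φ_k ≤ φ_j · exp(-Δυ (k - j)²)`, so
distinct nodes are separated relative to the larger one: `|φ_j - φ_k| ≥ (1 - e^{-Δυ}) max φ_j φ_k`.
At a node `φ_m` with `m > N₁`, every factor of `L_n(φ_m)` is at most `(1 - e^{-Δυ})⁻¹`, and the
factors with `j > n` carry an extra `exp(-Δυ (j - n)²)`. Since `n ≤ η N₁`, these add up to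
`exp(-Δυ (N₁ - n)³/3) ≤ exp(-Δυ (1 - η)³ N₁³/3)`, which swallows the exponential
`(1 - e^{-Δυ})^{-2N₁}` and the linear factor `1 + 2 N₁ (1 - e^{-Δυ})⁻¹` coming from `L_n'(φ_n)`
once `N₁` is large.
-/

open Finset Real

lemma cube_div_three_le_sum_range_sq (K : ℕ) :
    (K : ℝ) ^ 3 / 3 ≤ ∑ k ∈ range K, ((k : ℝ) + 1) ^ 2 := by
  induction K with
  | zero => simp
  | succ K ih =>
    rw [sum_range_succ]
    push_cast
    nlinarith [(Nat.cast_nonneg K : (0 : ℝ) ≤ K)]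

lemma abs_sum_le_card_mul {ι : Type*} {s : Finset ι} {f : ι → ℝ} {C : ℝ}
    (hf : ∀ i ∈ s, |f i| ≤ C) : |∑ i ∈ s, f i| ≤ #s * C :=
  (abs_sum_le_sum_abs f s).trans <| by
    simpa only [nsmul_eq_mul] using sum_le_card_nsmul s _ C hf

lemma one_add_two_mul_mul_pow_sq_le_exp {B : ℝ} (hB : 0 ≤ B) (N : ℕ) :
    (1 + 2 * N * B) * (B ^ N) ^ 2 ≤ exp (4 * N * B) := by
  have hlin : 1 + 2 * N * B ≤ exp (2 * N * B) := by
    linarith [add_one_le_exp (2 * N * B)]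
  have hpow : B ^ N ≤ exp (N * B) := by
    rw [exp_nat_mul]
    exact pow_le_pow_left₀ hB (by linarith [add_one_le_exp B]) N
  calc (1 + 2 * N * B) * (B ^ N) ^ 2 ≤ exp (2 * N * B) * exp (N * B) ^ 2 := by gcongr
    _ = exp (4 * N * B) := by rw [← exp_nat_mul, ← exp_add]; push_cast; ring_nf

lemma card_erase_Icc_le (N n : ℕ) : #((Icc 1 N).erase n) ≤ N :=
  card_erase_le.trans (by simp)

lemma sub_cube_div_three_le_sum_tsub_sq {N n : ℕ} (hnN : n ≤ N) :
    ((N : ℝ) - n) ^ 3 / 3 ≤ ∑ j ∈ (Icc 1 N).erase n, ((j - n : ℕ) : ℝ) ^ 2 := by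
  have hsub : Ico (n + 1) (N + 1) ⊆ (Icc 1 N).erase n := by
    intro j hj
    simp only [mem_Ico] at hj
    simp only [mem_erase, mem_Icc]
    omega
  calc ((N : ℝ) - n) ^ 3 / 3 = ((N - n : ℕ) : ℝ) ^ 3 / 3 := by rw [Nat.cast_sub hnN]
    _ ≤ ∑ k ∈ range (N - n), ((k : ℝ) + 1) ^ 2 := cube_div_three_le_sum_range_sq _
    _ = ∑ j ∈ Ico (n + 1) (N + 1), ((j - n : ℕ) : ℝ) ^ 2 := by
      rw [sum_Ico_eq_sum_range, Nat.add_sub_add_right]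
      refine sum_congr rfl fun k _ => ?_
      rw [show n + 1 + k - n = k + 1 by omega]
      push_cast; ring
    _ ≤ _ := sum_le_sum_of_subset_of_nonneg hsub fun _ _ _ => sq_nonneg _

lemma one_sub_exp_neg_pos {κ : ℝ} (hκ : 0 < κ) : 0 < 1 - exp (-κ) :=
  sub_pos.mpr (exp_lt_one_iff.mpr (neg_lt_zero.mpr hκ))

lemma one_le_inv_one_sub_exp_neg {κ : ℝ} (hκ : 0 < κ) : 1 ≤ (1 - exp (-κ))⁻¹ :=
  (one_le_inv₀ (one_sub_exp_neg_pos hκ)).mpr (by linarith [exp_pos (-κ)])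

def PhiGaussianDecay (lam : ℕ → ℝ) (Δ κ : ℝ) : Prop :=
  ∀ j k : ℕ, 1 ≤ j → j ≤ k → phi lam Δ k ≤ phi lam Δ j * exp (-κ * ((k : ℝ) - j) ^ 2)

section Nodes

variable {lam : ℕ → ℝ} {Δ κ : ℝ}

lemma phi_pos (n : ℕ) : 0 < phi lam Δ n := exp_pos _

lemma phiGaussianDecay_of_gap {υ : ℝ} (hΔ : 0 ≤ Δ) (hυ : 0 ≤ υ)
    (hgap : ∀ n m : ℕ, 1 ≤ n → n ≤ m → υ * ((m : ℝ) ^ 2 - (n : ℝ) ^ 2) ≤ lam m - lam n) :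
    PhiGaussianDecay lam Δ (Δ * υ) := by
  intro j k hj hjk
  have hsq : ((k : ℝ) - j) ^ 2 ≤ (k : ℝ) ^ 2 - (j : ℝ) ^ 2 := by
    have : (j : ℝ) ≤ k := by exact_mod_cast hjk
    nlinarith [(Nat.cast_nonneg j : (0 : ℝ) ≤ j)]
  have hgap' : υ * ((k : ℝ) - j) ^ 2 ≤ lam k - lam j :=
    (mul_le_mul_of_nonneg_left hsq hυ).trans (hgap j k hj hjk)
  rw [phi, phi, ← exp_add]
  exact exp_le_exp.mpr (by nlinarith [mul_le_mul_of_nonneg_left hgap' hΔ])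

lemma abs_phi_sub_phi_le (hκ : 0 ≤ κ)
    (hdecay : PhiGaussianDecay lam Δ κ)
    {j k : ℕ} (hj : 1 ≤ j) (hjk : j ≤ k) :
    |phi lam Δ k - phi lam Δ j| ≤ phi lam Δ j := by
  have hexp : exp (-κ * ((k : ℝ) - j) ^ 2) ≤ 1 :=
    exp_le_one_iff.mpr (by nlinarith [sq_nonneg ((k : ℝ) - j)])
  have hkj : phi lam Δ k ≤ phi lam Δ j :=
    (hdecay j k hj hjk).trans (mul_le_of_le_one_right (phi_pos j).le hexp)
  rw [abs_of_nonpos (by linarith)]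
  linarith [phi_pos (lam := lam) (Δ := Δ) k]

lemma one_sub_exp_mul_max_le_abs_phi_sub (hκ : 0 ≤ κ)
    (hdecay : PhiGaussianDecay lam Δ κ)
    {j k : ℕ} (hj : 1 ≤ j) (hk : 1 ≤ k) (hjk : j ≠ k) :
    (1 - exp (-κ)) * max (phi lam Δ j) (phi lam Δ k) ≤ |phi lam Δ j - phi lam Δ k| := by
  wlog hlt : j < k generalizing j k
  · rw [max_comm, abs_sub_comm]
    exact this hk hj hjk.symm (by omega)
  have hexp : exp (-κ * ((k : ℝ) - j) ^ 2) ≤ exp (-κ) := by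
    have : (1 : ℝ) ≤ ((k : ℝ) - j) ^ 2 := by
      have : (j : ℝ) + 1 ≤ k := by exact_mod_cast hlt
      nlinarith
    exact exp_le_exp.mpr (by nlinarith)
  have hkj : phi lam Δ k ≤ phi lam Δ j * exp (-κ) :=
    (hdecay j k hj hlt.le).trans (mul_le_mul_of_nonneg_left hexp (phi_pos j).le)
  have hexp1 : exp (-κ) ≤ 1 := exp_le_one_iff.mpr (by linarith)
  have hmax : max (phi lam Δ j) (phi lam Δ k) = phi lam Δ j :=
    max_eq_left (hkj.trans (mul_le_of_le_one_right (phi_pos j).le hexp1))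
  rw [hmax, abs_of_nonneg (by nlinarith [phi_pos (lam := lam) (Δ := Δ) j])]
  linarith

/-- For `j < n` the truncated difference `j - n` is `0`, so the factor is only bounded by the
separation constant; the decay comes from the nodes beyond `n`. -/
lemma abs_lag_factor_le (hκ : 0 < κ)
    (hdecay : PhiGaussianDecay lam Δ κ)
    {N n j m : ℕ} (hn : 1 ≤ n) (hj : 1 ≤ j) (hjN : j ≤ N) (hNm : N < m) (hjn : j ≠ n) :
    |(phi lam Δ m - phi lam Δ j) / (phi lam Δ n - phi lam Δ j)|
      ≤ (1 - exp (-κ))⁻¹ * exp (-κ * ((j - n : ℕ) : ℝ) ^ 2) := by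
  have hc := one_sub_exp_neg_pos hκ
  set M := max (phi lam Δ n) (phi lam Δ j)
  have hM : 0 < M := (phi_pos n).trans_le (le_max_left _ _)
  have hnum : |phi lam Δ m - phi lam Δ j| ≤ M * exp (-κ * ((j - n : ℕ) : ℝ) ^ 2) := by
    refine (abs_phi_sub_phi_le hκ.le hdecay hj (by omega)).trans ?_
    rcases lt_or_gt_of_ne hjn with hlt | hgt
    · rw [Nat.sub_eq_zero_of_le hlt.le]
      norm_num
      exact le_max_right _ _
    · rw [Nat.cast_sub hgt.le]
      exact (hdecay n j hn hgt.le).trans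
        (mul_le_mul_of_nonneg_right (le_max_left _ _) (exp_pos _).le)
  have hden := one_sub_exp_mul_max_le_abs_phi_sub hκ.le hdecay hn hj hjn.symm
  rw [abs_div]
  calc |phi lam Δ m - phi lam Δ j| / |phi lam Δ n - phi lam Δ j|
      ≤ M * exp (-κ * ((j - n : ℕ) : ℝ) ^ 2) / ((1 - exp (-κ)) * M) :=
        div_le_div₀ (by positivity) hnum (by positivity) hden
    _ = (1 - exp (-κ))⁻¹ * exp (-κ * ((j - n : ℕ) : ℝ) ^ 2) := by
        field_simp

lemma abs_Lag_le (hκ : 0 < κ)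
    (hdecay : PhiGaussianDecay lam Δ κ)
    {N n m : ℕ} (hn : 1 ≤ n) (hnN : n ≤ N) (hNm : N < m) :
    |Lag lam Δ N n (phi lam Δ m)|
      ≤ (1 - exp (-κ))⁻¹ ^ N * exp (-κ * ((N : ℝ) - n) ^ 3 / 3) := by
  have hB := one_le_inv_one_sub_exp_neg hκ
  rw [Lag, abs_prod]
  calc ∏ j ∈ (Icc 1 N).erase n, |(phi lam Δ m - phi lam Δ j) / (phi lam Δ n - phi lam Δ j)|
      ≤ ∏ j ∈ (Icc 1 N).erase n, (1 - exp (-κ))⁻¹ * exp (-κ * ((j - n : ℕ) : ℝ) ^ 2) := by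
        refine prod_le_prod (fun _ _ => abs_nonneg _) fun j hj => ?_
        simp only [mem_erase, mem_Icc] at hj
        exact abs_lag_factor_le hκ hdecay hn hj.2.1 hj.2.2 hNm hj.1
    _ = (1 - exp (-κ))⁻¹ ^ #((Icc 1 N).erase n)
          * exp (-κ * ∑ j ∈ (Icc 1 N).erase n, ((j - n : ℕ) : ℝ) ^ 2) := by
        rw [prod_mul_distrib, prod_const, mul_sum, exp_sum]
    _ ≤ (1 - exp (-κ))⁻¹ ^ N * exp (-κ * ((N : ℝ) - n) ^ 3 / 3) := by
        gcongr
        · exact card_erase_Icc_le N n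
        · rw [mul_div_assoc]
          exact mul_le_mul_of_nonpos_left (sub_cube_div_three_le_sum_tsub_sq hnN) (by linarith)

lemma abs_LagD_le (hκ : 0 < κ)
    (hdecay : PhiGaussianDecay lam Δ κ)
    {N n : ℕ} (hn : 1 ≤ n) :
    |LagD lam Δ N n| ≤ N * ((1 - exp (-κ))⁻¹ / phi lam Δ n) := by
  have hc := one_sub_exp_neg_pos hκ
  have hφ := phi_pos (lam := lam) (Δ := Δ) n
  rw [LagD]
  refine (abs_sum_le_card_mul (C := (1 - exp (-κ))⁻¹ / phi lam Δ n) fun k hk => ?_).trans ?_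
  · simp only [mem_erase, mem_Icc] at hk
    have hden := (mul_le_mul_of_nonneg_left (le_max_left _ _) hc.le).trans
      (one_sub_exp_mul_max_le_abs_phi_sub hκ.le hdecay hn hk.2.1 hk.1.symm)
    calc |1 / (phi lam Δ n - phi lam Δ k)| = 1 / |phi lam Δ n - phi lam Δ k| := by
          rw [abs_div, abs_one]
      _ ≤ 1 / ((1 - exp (-κ)) * phi lam Δ n) := one_div_le_one_div_of_le (by positivity) hden
      _ = (1 - exp (-κ))⁻¹ / phi lam Δ n := by rw [one_div, mul_inv, div_eq_mul_inv]
  · gcongr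
    exact_mod_cast card_erase_Icc_le N n

lemma abs_HermH_le (hκ : 0 < κ)
    (hdecay : PhiGaussianDecay lam Δ κ)
    {N n : ℕ} {z : ℝ} (hn : 1 ≤ n) (hz : |z - phi lam Δ n| ≤ phi lam Δ n) :
    |HermH lam Δ N n z| ≤ (1 + 2 * N * (1 - exp (-κ))⁻¹) * Lag lam Δ N n z ^ 2 := by
  have hφ := phi_pos (lam := lam) (Δ := Δ) n
  have hD := abs_LagD_le hκ hdecay (N := N) hn
  have hlin : |1 - 2 * (z - phi lam Δ n) * LagD lam Δ N n| ≤ 1 + 2 * N * (1 - exp (-κ))⁻¹ :=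
    calc |1 - 2 * (z - phi lam Δ n) * LagD lam Δ N n|
        ≤ |1| + |2 * (z - phi lam Δ n) * LagD lam Δ N n| := abs_sub _ _
      _ = 1 + 2 * (|z - phi lam Δ n| * |LagD lam Δ N n|) := by
        rw [abs_one, abs_mul, abs_mul, abs_two, mul_assoc]
      _ ≤ 1 + 2 * (phi lam Δ n * (N * ((1 - exp (-κ))⁻¹ / phi lam Δ n))) := by gcongr
      _ = 1 + 2 * N * (1 - exp (-κ))⁻¹ := by field_simp
  rw [HermH, abs_mul, abs_of_nonneg (sq_nonneg (Lag lam Δ N n z))]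
  exact mul_le_mul_of_nonneg_right hlin (sq_nonneg _)

lemma abs_Ky_le (hκ : 0 < κ)
    (hdecay : PhiGaussianDecay lam Δ κ)
    {y : ℕ → ℝ} {ℓ L : ℝ} (hy : ∀ m : ℕ, 1 ≤ m → |y m| ≤ ℓ) {N N₂ n : ℕ} (hn : 1 ≤ n)
    (hnN : n ≤ N) (hL : ∀ m : ℕ, N < m → |Lag lam Δ N n (phi lam Δ m)| ≤ L) :
    |Ky lam y Δ N N₂ n| ≤ N₂ * (ℓ * ((1 + 2 * N * (1 - exp (-κ))⁻¹) * L ^ 2)) := by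
  have hB := one_le_inv_one_sub_exp_neg hκ
  rw [Ky]
  refine (abs_sum_le_card_mul fun m hm => ?_).trans_eq (by rw [Nat.card_Icc]; congr; omega)
  simp only [mem_Icc] at hm
  have hz := abs_phi_sub_phi_le hκ.le hdecay hn (show n ≤ m by omega)
  have hLag : Lag lam Δ N n (phi lam Δ m) ^ 2 ≤ L ^ 2 :=
    (sq_abs _).symm.trans_le (pow_le_pow_left₀ (abs_nonneg _) (hL m (by omega)) 2)
  rw [abs_mul]
  refine mul_le_mul (hy m (by omega)) ((abs_HermH_le hκ hdecay hn hz).trans ?_)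
    (abs_nonneg _) ((abs_nonneg _).trans (hy m (by omega)))
  gcongr

lemma abs_Kl_le (hΔ : 0 < Δ) (hκ : 0 ≤ κ)
    (hdecay : PhiGaussianDecay lam Δ κ)
    {y : ℕ → ℝ} {ℓ L : ℝ} (hℓ : 0 < ℓ) (hy : ∀ m : ℕ, 1 ≤ m → ℓ⁻¹ ≤ |y m| ∧ |y m| ≤ ℓ)
    {N N₂ n : ℕ} (hn : 1 ≤ n) (hnN : n ≤ N)
    (hL : ∀ m : ℕ, N < m → |Lag lam Δ N n (phi lam Δ m)| ≤ L) :
    |Kl lam y Δ N N₂ n| ≤ N₂ * ℓ ^ 2 / Δ * L ^ 2 := by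
  have hφ := phi_pos (lam := lam) (Δ := Δ) n
  have hinv : |Δ * y n * phi lam Δ n|⁻¹ ≤ ℓ / (Δ * phi lam Δ n) := by
    rw [abs_mul, abs_mul, abs_of_pos hΔ, abs_of_pos hφ, div_eq_mul_inv,
      show Δ * |y n| * phi lam Δ n = |y n| * (Δ * phi lam Δ n) by ring, mul_inv]
    gcongr
    exact inv_le_of_inv_le₀ hℓ (hy n hn).1
  have hsum : |∑ m ∈ Icc (N + 1) (N + N₂), y m * HermHt lam Δ N n (phi lam Δ m)|
      ≤ N₂ * (ℓ * (phi lam Δ n * L ^ 2)) := by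
    refine (abs_sum_le_card_mul fun m hm => ?_).trans_eq (by rw [Nat.card_Icc]; congr; omega)
    simp only [mem_Icc] at hm
    have hz := abs_phi_sub_phi_le hκ hdecay hn (show n ≤ m by omega)
    have hLag : Lag lam Δ N n (phi lam Δ m) ^ 2 ≤ L ^ 2 :=
      (sq_abs _).symm.trans_le (pow_le_pow_left₀ (abs_nonneg _) (hL m (by omega)) 2)
    rw [abs_mul, HermHt, abs_mul, abs_of_nonneg (sq_nonneg (Lag lam Δ N n (phi lam Δ m)))]
    gcongr
    exact (hy m (by omega)).2
  rw [Kl, abs_mul, abs_neg, abs_inv]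
  calc |Δ * y n * phi lam Δ n|⁻¹ * |∑ m ∈ Icc (N + 1) (N + N₂), y m * HermHt lam Δ N n (phi lam Δ m)|
      ≤ ℓ / (Δ * phi lam Δ n) * (N₂ * (ℓ * (phi lam Δ n * L ^ 2))) := by gcongr
    _ = N₂ * ℓ ^ 2 / Δ * L ^ 2 := by field_simp

end Nodes

lemma one_add_mul_mul_sq_le_exp_neg_cube {κ B η : ℝ} {N n : ℕ} (hκ : 0 ≤ κ) (hB : 0 ≤ B)
    (hη1 : η < 1) (hnη : (n : ℝ) ≤ η * N) (hN : 4 * B ≤ κ * (1 - η) ^ 3 / 3 * N ^ 2) :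
    (1 + 2 * N * B) * (B ^ N * exp (-κ * ((N : ℝ) - n) ^ 3 / 3)) ^ 2
      ≤ exp (-(κ * (1 - η) ^ 3 / 3) * N ^ 3) := by
  have hcube : ((1 - η) * N) ^ 3 ≤ ((N : ℝ) - n) ^ 3 :=
    pow_le_pow_left₀ (mul_nonneg (by linarith) (Nat.cast_nonneg N)) (by linarith) 3
  have hlin : 4 * N * B ≤ κ * (1 - η) ^ 3 / 3 * N ^ 3 := by
    nlinarith [mul_le_mul_of_nonneg_left hN (Nat.cast_nonneg (α := ℝ) N)]
  calc (1 + 2 * N * B) * (B ^ N * exp (-κ * ((N : ℝ) - n) ^ 3 / 3)) ^ 2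
      = (1 + 2 * N * B) * (B ^ N) ^ 2 * exp (-(2 * κ * ((N : ℝ) - n) ^ 3 / 3)) := by
        rw [mul_pow, sq (exp _), ← exp_add]; ring_nf
    _ ≤ exp (4 * N * B) * exp (-(2 * κ * ((N : ℝ) - n) ^ 3 / 3)) := by
        gcongr; exact one_add_two_mul_mul_pow_sq_le_exp hB N
    _ ≤ exp (-(κ * (1 - η) ^ 3 / 3) * N ^ 3) := by
        rw [← exp_add]
        gcongr
        nlinarith [mul_le_mul_of_nonneg_left hcube hκ]

theorem stmt2_general (lam y : ℕ → ℝ) (υ Υ ℓ Δ η : ℝ) (N₂ : ℕ)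
    (hυ : 0 < υ)
    (hgap : ∀ n m : ℕ, 1 ≤ n → n ≤ m →
      υ * ((m : ℝ) ^ 2 - (n : ℝ) ^ 2) ≤ lam m - lam n ∧
      lam m - lam n ≤ Υ * ((m : ℝ) ^ 2 - (n : ℝ) ^ 2))
    (hℓ : 1 < ℓ) (hy : ∀ n : ℕ, 1 ≤ n → ℓ⁻¹ ≤ |y n| ∧ |y n| ≤ ℓ)
    (hΔ : 0 < Δ) (hη1 : η < 1) (hN₂ : 1 ≤ N₂) :
    ∃ γy γl Γ : ℝ, 0 < γy ∧ 0 < γl ∧ 0 < Γ ∧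
      ∃ N₀ : ℕ, ∀ N₁ : ℕ, N₀ ≤ N₁ →
        ∀ n : ℕ, 1 ≤ n → n ≤ ⌊η * (N₁ : ℝ)⌋₊ →
          |Ky lam y Δ N₁ N₂ n| ≤ γy * Real.exp (-Γ * Δ * (N₁ : ℝ) ^ 3) ∧
          |Kl lam y Δ N₁ N₂ n| ≤ γl * Real.exp (-Γ * Δ * (N₁ : ℝ) ^ 3) := by
  have hκ : 0 < Δ * υ := mul_pos hΔ hυ
  have hdecay :=
    phiGaussianDecay_of_gap hΔ.le hυ.le fun n m hn hnm => (hgap n m hn hnm).1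
  set B := (1 - exp (-(Δ * υ)))⁻¹
  have hB : 0 ≤ B := zero_le_one.trans (one_le_inv_one_sub_exp_neg hκ)
  have hΓ : 0 < υ * (1 - η) ^ 3 / 3 := div_pos (mul_pos hυ (pow_pos (sub_pos.mpr hη1) 3)) three_pos
  refine ⟨N₂ * ℓ, N₂ * ℓ ^ 2 / Δ, υ * (1 - η) ^ 3 / 3, by positivity, by positivity, hΓ,
    ⌈4 * B / (υ * (1 - η) ^ 3 / 3 * Δ)⌉₊, fun N hN n hn hnη => ?_⟩
  replace hnη : (n : ℝ) ≤ η * N := (Nat.le_floor_iff' (by omega)).mp hnη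
  have hnN : n ≤ N := by
    have : (1 : ℝ) ≤ n := by exact_mod_cast hn
    exact_mod_cast (show (n : ℝ) ≤ N by nlinarith)
  have hNB : 4 * B ≤ Δ * υ * (1 - η) ^ 3 / 3 * N ^ 2 := by
    have h1N : (1 : ℝ) ≤ N := by exact_mod_cast hn.trans hnN
    have := (div_le_iff₀ (by positivity)).mp (Nat.ceil_le.mp hN)
    nlinarith
  have hL (m : ℕ) (hm : N < m) := abs_Lag_le hκ hdecay hn hnN hm
  have hexp := one_add_mul_mul_sq_le_exp_neg_cube hκ.le hB hη1 hnη hNB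
  rw [show -(υ * (1 - η) ^ 3 / 3) * Δ * N ^ 3 = -(Δ * υ * (1 - η) ^ 3 / 3) * N ^ 3 by ring]
  constructor
  · calc |Ky lam y Δ N N₂ n|
        ≤ N₂ * (ℓ * ((1 + 2 * N * B) * (B ^ N * exp (-(Δ * υ) * ((N : ℝ) - n) ^ 3 / 3)) ^ 2)) :=
          abs_Ky_le hκ hdecay (fun m hm => (hy m hm).2) hn hnN hL
      _ ≤ N₂ * ℓ * exp (-(Δ * υ * (1 - η) ^ 3 / 3) * N ^ 3) := by
          rw [mul_assoc (N₂ : ℝ) ℓ]; gcongr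
  · calc |Kl lam y Δ N N₂ n|
        ≤ N₂ * ℓ ^ 2 / Δ * (B ^ N * exp (-(Δ * υ) * ((N : ℝ) - n) ^ 3 / 3)) ^ 2 :=
          abs_Kl_le hΔ hκ.le hdecay (by linarith) hy hn hnN hL
      _ ≤ N₂ * ℓ ^ 2 / Δ * exp (-(Δ * υ * (1 - η) ^ 3 / 3) * N ^ 3) := by
          gcongr
          refine le_trans ?_ hexp
          exact le_mul_of_one_le_left (sq_nonneg _) (by nlinarith)

theorem stmt2 (lam y : ℕ → ℝ) (υ Υ ℓ Δ η : ℝ) (N₂ : ℕ)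
    (hυ : 0 < υ) (hυΥ : υ ≤ Υ)
    (hmono : ∀ n m : ℕ, 1 ≤ n → n < m → lam n < lam m)
    (hgap : ∀ n m : ℕ, 1 ≤ n → n ≤ m →
      υ * ((m : ℝ) ^ 2 - (n : ℝ) ^ 2) ≤ lam m - lam n ∧
      lam m - lam n ≤ Υ * ((m : ℝ) ^ 2 - (n : ℝ) ^ 2))
    (hℓ : 1 < ℓ) (hy : ∀ n : ℕ, 1 ≤ n → ℓ⁻¹ ≤ |y n| ∧ |y n| ≤ ℓ)
    (hΔ : 0 < Δ) (hη : 0 < η) (hη1 : η < 1) (hN₂ : 1 ≤ N₂) :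
    ∃ γy γl Γ : ℝ, 0 < γy ∧ 0 < γl ∧ 0 < Γ ∧
      ∃ N₀ : ℕ, ∀ N₁ : ℕ, N₀ ≤ N₁ →
        ∀ n : ℕ, 1 ≤ n → n ≤ ⌊η * (N₁ : ℝ)⌋₊ →
          |Ky lam y Δ N₁ N₂ n| ≤ γy * Real.exp (-Γ * Δ * (N₁ : ℝ) ^ 3) ∧
          |Kl lam y Δ N₁ N₂ n| ≤ γl * Real.exp (-Γ * Δ * (N₁ : ℝ) ^ 3) :=
  stmt2_general lam y υ Υ ℓ Δ η N₂ hυ hgap hℓ hy hΔ hη1 hN₂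
end

section
/- For every Δ > 0, every N₁ ∈ ℕ, and every n ∈ {1,…,N₁}: (i) 𝒢_{1,2}(Δ·Υ·(2N₁+1)) − g(Δ·Υ·(N₁+1−n)·(2N₁+1)) ≤ θ¹_{n,Δ,N₁} ≤ 𝒢_{0,∞}(Δ·υ·N₁) − g(Δ·υ·(N₁+1−n)·(N₁+1)); (ii) if n ≥ 2 then 𝒢_{1,2}(Δ·Υ·(2n−1)) ≤ θ²_{n,Δ} ≤ 𝒢_{0,∞}(Δ·υ·(n+1)); (iii) if n ≤ N₁−1 then 𝒢_{1,2}(Δ·Υ·(N₁+n+1)) ≤ θ³_{n,Δ,N₁} ≤ 𝒢_{0,∞}(Δ·υ·(2n+1)). -/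
open MeasureTheory

/-- `g(x) = −ln(1 − e^{−x})`. -/
noncomputable def gfun (x : ℝ) : ℝ := -Real.log (1 - Real.exp (-x))

/-- `𝒢_{w₁,w₂}(ζ) = ∫_{w₁}^{w₂} g(ζ·x) dx` for finite endpoints. -/
noncomputable def Gint (w₁ w₂ ζ : ℝ) : ℝ := ∫ x in Set.Ioo w₁ w₂, gfun (ζ * x)

/-- `𝒢_{w₁,∞}(ζ) = ∫_{w₁}^{∞} g(ζ·x) dx`. -/
noncomputable def GintInf (w₁ ζ : ℝ) : ℝ := ∫ x in Set.Ioi w₁, gfun (ζ * x)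

/-- `θ¹_{n,Δ,N₁} = Σ_{j ∈ {1,…,N₁}, j≠n} g(Δ·(λ_{N₁+1} − λ_j))`. -/
noncomputable def theta1 (lam : ℕ → ℝ) (Δ : ℝ) (N₁ n : ℕ) : ℝ :=
  ∑ j ∈ (Finset.Icc 1 N₁).erase n, gfun (Δ * (lam (N₁ + 1) - lam j))

/-- `θ²_{n,Δ} = Σ_{j=1}^{n−1} g(Δ·(λ_n − λ_j))`. -/
noncomputable def theta2 (lam : ℕ → ℝ) (Δ : ℝ) (n : ℕ) : ℝ :=
  ∑ j ∈ Finset.Icc 1 (n - 1), gfun (Δ * (lam n - lam j))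

/-- `θ³_{n,Δ,N₁} = Σ_{j=n+1}^{N₁} g(Δ·(λ_j − λ_n))`. -/
noncomputable def theta3 (lam : ℕ → ℝ) (Δ : ℝ) (N₁ n : ℕ) : ℝ :=
  ∑ j ∈ Finset.Icc (n + 1) N₁, gfun (Δ * (lam j - lam n))

/-! With `k = b - a`, the gap condition reads `υ k (a + b) ≤ λ_b - λ_a ≤ Υ k (a + b)`. After
reindexing by `k`, each `θ` is therefore squeezed termwise, since `g` decreases on `(0, ∞)`,
between two sums `∑_{k=1}^{M} g(ζ k)`. As `g` is also nonnegative and integrable on `(0, ∞)`,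
such a sum lies between `g(ζ) ≥ 𝒢_{1,2}(ζ)` and `∫_0^∞ g(ζ x) dx`. -/

open Real Set

lemma one_sub_exp_neg_pos_s13 {x : ℝ} (hx : 0 < x) : 0 < 1 - exp (-x) := by
  simpa using hx

lemma gfun_nonneg {x : ℝ} (hx : 0 < x) : 0 ≤ gfun x :=
  neg_nonneg.2 <| log_nonpos (one_sub_exp_neg_pos_s13 hx).le (by linarith [exp_pos (-x)])

lemma gfun_antitoneOn : AntitoneOn gfun (Ioi 0) := fun x hx y _ hxy =>
  neg_le_neg <| log_le_log (one_sub_exp_neg_pos_s13 hx) (by gcongr)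

lemma continuousOn_gfun : ContinuousOn gfun (Ioi 0) :=
  ((continuous_const.sub (continuous_exp.comp continuous_neg)).continuousOn.log
    fun _ hx => (one_sub_exp_neg_pos_s13 hx).ne').neg

lemma gfun_le_self_sub_log {x : ℝ} (hx : 0 < x) : gfun x ≤ x - log x := by
  have : x * exp (-x) ≤ 1 - exp (-x) := by
    have := add_one_le_exp x
    rw [exp_neg]
    field_simp
    linarith
  have := log_le_log (by positivity) this
  rw [log_mul hx.ne' (exp_pos _).ne', log_exp] at this
  unfold gfun
  linarith

lemma gfun_le_mul_exp_neg {x : ℝ} (hx : 1 ≤ x) : gfun x ≤ (1 - exp (-1))⁻¹ * exp (-x) := by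
  have h1 : 0 < 1 - exp (-1) := one_sub_exp_neg_pos_s13 one_pos
  have hx' : 1 - exp (-1) ≤ 1 - exp (-x) := by gcongr
  have hlog := one_sub_inv_le_log_of_pos (h1.trans_le hx')
  have : (1 - exp (-x))⁻¹ - 1 ≤ (1 - exp (-1))⁻¹ * exp (-x) :=
    calc (1 - exp (-x))⁻¹ - 1 = exp (-x) / (1 - exp (-x)) := by
          field_simp [(h1.trans_le hx').ne']; ring
      _ ≤ exp (-x) / (1 - exp (-1)) := by gcongr
      _ = (1 - exp (-1))⁻¹ * exp (-x) := div_eq_inv_mul ..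
  unfold gfun
  linarith

lemma integrableOn_gfun : IntegrableOn gfun (Ioi 0) := by
  have hmeas (s : Set ℝ) (hs : MeasurableSet s) (h : s ⊆ Ioi 0) :
      AEStronglyMeasurable gfun (volume.restrict s) :=
    (continuousOn_gfun.mono h).aestronglyMeasurable hs
  have near_zero : IntegrableOn gfun (Ioc 0 1) := by
    refine Integrable.mono'
      ((integrableOn_const (C := (1 : ℝ)) (by simp)).sub
        intervalIntegral.intervalIntegrable_log'.1)
      (hmeas _ measurableSet_Ioc Ioc_subset_Ioi_self)
      (ae_restrict_of_forall_mem measurableSet_Ioc fun x hx => ?_)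
    rw [norm_of_nonneg (gfun_nonneg hx.1)]
    simp only [Pi.sub_apply]
    linarith [gfun_le_self_sub_log hx.1, hx.2]
  have near_top : IntegrableOn gfun (Ioi 1) := by
    refine Integrable.mono' ((exp_neg_integrableOn_Ioi 1 one_pos).const_mul (1 - exp (-1))⁻¹)
      (hmeas _ measurableSet_Ioi (Ioi_subset_Ioi zero_le_one))
      (ae_restrict_of_forall_mem measurableSet_Ioi fun x hx => ?_)
    rw [norm_of_nonneg (gfun_nonneg (zero_lt_one.trans hx))]
    simpa using gfun_le_mul_exp_neg (le_of_lt hx)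
  simpa [Ioc_union_Ioi_eq_Ioi zero_le_one] using near_zero.union near_top

lemma integrableOn_gfun_mul {ζ : ℝ} (hζ : 0 < ζ) :
    IntegrableOn (fun x => gfun (ζ * x)) (Ioi 0) :=
  (integrableOn_Ioi_comp_mul_left_iff gfun 0 hζ).2 (by simpa using integrableOn_gfun)

/-- Unlike `AntitoneOn.sum_range_le_integral`, this does not ask for monotonicity at `0`, where
`gfun (ζ * ·)` fails it (`gfun 0 = 0`). -/
theorem AntitoneOn.sum_Icc_le_integral_Ioi {f : ℝ → ℝ} (hf : AntitoneOn f (Ioi 0))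
    (hint : IntegrableOn f (Ioi 0)) (hnonneg : ∀ x ∈ Ioi (0 : ℝ), 0 ≤ f x) (M : ℕ) :
    ∑ k ∈ Finset.Icc 1 M, f k ≤ ∫ x in Ioi 0, f x := by
  have hint' (a b : ℝ) (ha : 0 ≤ a) (hab : a ≤ b) : IntervalIntegrable f volume a b :=
    (intervalIntegrable_iff_integrableOn_Ioc_of_le hab).2 <|
      hint.mono_set fun _ hx => ha.trans_lt hx.1
  calc ∑ k ∈ Finset.Icc 1 M, f k
      = ∑ i ∈ Finset.range M,
          ∫ _ in (i : ℝ)..((i + 1 : ℕ) : ℝ), f ((i + 1 : ℕ) : ℝ) := by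
        rw [← Finset.Ico_add_one_right_eq_Icc, Finset.sum_Ico_eq_sum_range,
          Nat.add_sub_cancel]
        simp [add_comm]
    _ ≤ ∑ i ∈ Finset.range M, ∫ x in (i : ℝ)..((i + 1 : ℕ) : ℝ), f x := by
        gcongr with i
        refine intervalIntegral.integral_mono_on_of_le_Ioo (by simp) (by simp)
          (hint' _ _ (by positivity) (by simp)) fun x hx => ?_
        exact hf (lt_of_le_of_lt (by positivity) hx.1) (mem_Ioi.2 (by positivity))
          (by exact_mod_cast hx.2.le)
    _ = ∫ x in (0 : ℝ)..M, f x := by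
        simpa using intervalIntegral.sum_integral_adjacent_intervals (a := ((↑) : ℕ → ℝ))
          fun k _ => hint' _ _ (by positivity) (by simp)
    _ ≤ ∫ x in Ioi 0, f x := by
        rw [intervalIntegral.integral_of_le (by positivity)]
        exact setIntegral_mono_set hint (ae_restrict_of_forall_mem measurableSet_Ioi hnonneg)
          Ioc_subset_Ioi_self.eventuallyLE

lemma sum_gfun_mul_le_GintInf {ζ : ℝ} (hζ : 0 < ζ) (M : ℕ) :
    ∑ k ∈ Finset.Icc 1 M, gfun (ζ * k) ≤ GintInf 0 ζ :=
  AntitoneOn.sum_Icc_le_integral_Ioi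
    (fun _ hx _ hy hxy => gfun_antitoneOn (mul_pos hζ hx) (mul_pos hζ hy) (by gcongr))
    (integrableOn_gfun_mul hζ) (fun _ hx => gfun_nonneg (mul_pos hζ hx)) M

lemma Gint_one_two_le_gfun {ζ : ℝ} (hζ : 0 < ζ) : Gint 1 2 ζ ≤ gfun ζ := by
  calc Gint 1 2 ζ ≤ ∫ _ in Ioo (1 : ℝ) 2, gfun ζ := by
        refine setIntegral_mono_on
          ((integrableOn_gfun_mul hζ).mono_set fun _ hx => zero_lt_one.trans hx.1)
          (integrableOn_const (by simp)) measurableSet_Ioo fun x hx => ?_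
        exact gfun_antitoneOn (by simpa using hζ) (mul_pos hζ (zero_lt_one.trans hx.1))
          (le_mul_of_one_le_right hζ.le hx.1.le)
    _ = gfun ζ := by norm_num

lemma Gint_one_two_le_sum {ζ : ℝ} (hζ : 0 < ζ) {M : ℕ} (hM : 1 ≤ M) :
    Gint 1 2 ζ ≤ ∑ k ∈ Finset.Icc 1 M, gfun (ζ * k) := by
  calc Gint 1 2 ζ ≤ gfun (ζ * (1 : ℕ)) := by simpa using Gint_one_two_le_gfun hζ
    _ ≤ ∑ k ∈ Finset.Icc 1 M, gfun (ζ * k) :=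
      Finset.single_le_sum (fun k hk => gfun_nonneg (mul_pos hζ (by
        exact_mod_cast (Finset.mem_Icc.1 hk).1))) (Finset.mem_Icc.2 ⟨le_rfl, hM⟩)

lemma sq_sub_sq_of_add_eq {a b k : ℕ} (hab : a + k = b) :
    (b : ℝ) ^ 2 - (a : ℝ) ^ 2 = k * (a + b) := by
  subst hab; push_cast; ring

lemma theta1_eq_sum_reflect (lam : ℕ → ℝ) (Δ : ℝ) (N n : ℕ) :
    theta1 lam Δ N n =
      ∑ k ∈ (Finset.Icc 1 N).erase (N + 1 - n),
        gfun (Δ * (lam (N + 1) - lam (N + 1 - k))) := by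
  refine Finset.sum_nbij' (fun j => N + 1 - j) (fun k => N + 1 - k) ?_ ?_ ?_ ?_ ?_ <;>
    intro j hj <;> simp only [Finset.mem_erase, Finset.mem_Icc] at hj ⊢
  all_goals first | omega | (congr 4; omega)

lemma theta2_eq_sum_reflect (lam : ℕ → ℝ) (Δ : ℝ) (n : ℕ) :
    theta2 lam Δ n = ∑ k ∈ Finset.Icc 1 (n - 1), gfun (Δ * (lam n - lam (n - k))) := by
  refine Finset.sum_nbij' (fun j => n - j) (fun k => n - k) ?_ ?_ ?_ ?_ ?_ <;>
    intro j hj <;> simp only [Finset.mem_Icc] at hj ⊢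
  all_goals first | omega | (congr 4; omega)

lemma theta3_eq_sum_shift (lam : ℕ → ℝ) (Δ : ℝ) (N n : ℕ) :
    theta3 lam Δ N n = ∑ k ∈ Finset.Icc 1 (N - n), gfun (Δ * (lam (n + k) - lam n)) := by
  refine Finset.sum_nbij' (fun j => j - n) (fun k => n + k) ?_ ?_ ?_ ?_ ?_ <;>
    intro j hj <;> simp only [Finset.mem_Icc] at hj ⊢
  all_goals first | omega | (congr 4; omega)

def HasQuadraticGaps (lam : ℕ → ℝ) (υ Υ : ℝ) : Prop :=
  ∀ n m : ℕ, 1 ≤ n → n ≤ m →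
    υ * ((m : ℝ) ^ 2 - (n : ℝ) ^ 2) ≤ lam m - lam n ∧
    lam m - lam n ≤ Υ * ((m : ℝ) ^ 2 - (n : ℝ) ^ 2)

section QuadraticGaps

variable {lam : ℕ → ℝ} {υ Υ Δ : ℝ}

lemma HasQuadraticGaps.gfun_le (hgap : HasQuadraticGaps lam υ Υ) (hυ : 0 < υ) (hΔ : 0 < Δ)
    {a b k : ℕ} (ha : 1 ≤ a) (hk : 1 ≤ k) (hab : a + k = b) {c : ℝ} (hc₀ : 0 < c)
    (hc : c ≤ a + b) :
    gfun (Δ * (lam b - lam a)) ≤ gfun (Δ * υ * c * k) := by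
  have hk' : (0 : ℝ) < k := by exact_mod_cast hk
  have hlo := (hgap a b ha (by omega)).1
  rw [sq_sub_sq_of_add_eq hab] at hlo
  have hle : Δ * υ * c * k ≤ Δ * (lam b - lam a) :=
    calc Δ * υ * c * k ≤ Δ * (υ * (k * (a + b))) := by
          rw [show Δ * υ * c * k = Δ * (υ * (k * c)) by ring]; gcongr
      _ ≤ Δ * (lam b - lam a) := by gcongr
  have hpos : 0 < Δ * υ * c * k := by positivity
  exact gfun_antitoneOn hpos (hpos.trans_le hle) hle

lemma HasQuadraticGaps.le_gfun (hgap : HasQuadraticGaps lam υ Υ) (hυ : 0 < υ) (hΔ : 0 < Δ)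
    (hΥ : 0 ≤ Υ) {a b k : ℕ} (ha : 1 ≤ a) (hk : 1 ≤ k) (hab : a + k = b) {C : ℝ}
    (hC : a + b ≤ C) :
    gfun (Δ * Υ * C * k) ≤ gfun (Δ * (lam b - lam a)) := by
  have hk' : (0 : ℝ) < k := by exact_mod_cast hk
  have ha' : (1 : ℝ) ≤ a := by exact_mod_cast ha
  obtain ⟨hlo, hhi⟩ := hgap a b ha (by omega)
  rw [sq_sub_sq_of_add_eq hab] at hlo hhi
  have hpos : 0 < Δ * (lam b - lam a) := by
    have : 0 < υ * (k * (a + b)) := by positivity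
    exact mul_pos hΔ (this.trans_le hlo)
  have hle : Δ * (lam b - lam a) ≤ Δ * Υ * C * k :=
    calc Δ * (lam b - lam a) ≤ Δ * (Υ * (k * (a + b))) := by gcongr
      _ ≤ Δ * (Υ * (k * C)) := by gcongr
      _ = Δ * Υ * C * k := by ring
  exact gfun_antitoneOn hpos (hpos.trans_le hle) hle

lemma theta1_bounds (hgap : HasQuadraticGaps lam υ Υ) (hυ : 0 < υ) (hΥ : 0 < Υ) (hΔ : 0 < Δ)
    {N n : ℕ} (hn : 1 ≤ n) (hnN : n ≤ N) :
    (Gint 1 2 (Δ * Υ * (2 * (N : ℝ) + 1)) -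
        gfun (Δ * Υ * ((N : ℝ) + 1 - (n : ℝ)) * (2 * (N : ℝ) + 1)) ≤
      theta1 lam Δ N n) ∧
      theta1 lam Δ N n ≤
        GintInf 0 (Δ * υ * (N : ℝ)) -
          gfun (Δ * υ * ((N : ℝ) + 1 - (n : ℝ)) * ((N : ℝ) + 1)) := by
  have hN : (1 : ℝ) ≤ N := by exact_mod_cast hn.trans hnN
  have hnN' : (n : ℝ) ≤ N := by exact_mod_cast hnN
  have hk₀ : N + 1 - n ∈ Finset.Icc 1 N := Finset.mem_Icc.2 ⟨by omega, by omega⟩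
  have hk₀_cast : ((N + 1 - n : ℕ) : ℝ) = N + 1 - n := by
    rw [Nat.cast_sub (by omega)]; push_cast; ring
  have hmem {k : ℕ} (hk : k ∈ (Finset.Icc 1 N).erase (N + 1 - n)) :
      1 ≤ k ∧ k ≤ N ∧ (1 : ℝ) ≤ k ∧ (k : ℝ) ≤ N := by
    obtain ⟨hk1, hkN⟩ := Finset.mem_Icc.1 (Finset.mem_of_mem_erase hk)
    exact ⟨hk1, hkN, by exact_mod_cast hk1, by exact_mod_cast hkN⟩
  rw [theta1_eq_sum_reflect]
  constructor
  · have hζ : 0 < Δ * Υ * (2 * (N : ℝ) + 1) := by positivity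
    calc Gint 1 2 (Δ * Υ * (2 * (N : ℝ) + 1)) -
          gfun (Δ * Υ * ((N : ℝ) + 1 - n) * (2 * N + 1))
        = Gint 1 2 (Δ * Υ * (2 * (N : ℝ) + 1)) -
            gfun (Δ * Υ * (2 * (N : ℝ) + 1) * (N + 1 - n : ℕ)) := by
          rw [hk₀_cast]; ring_nf
      _ ≤ ∑ k ∈ (Finset.Icc 1 N).erase (N + 1 - n),
            gfun (Δ * Υ * (2 * (N : ℝ) + 1) * k) := by
        rw [Finset.sum_erase_eq_sub hk₀]
        linarith [Gint_one_two_le_sum hζ (M := N) (by omega)]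
      _ ≤ _ := Finset.sum_le_sum fun k hk => by
        obtain ⟨hk1, hkN, hk1', -⟩ := hmem hk
        refine hgap.le_gfun hυ hΔ hΥ.le (a := N + 1 - k) (by omega) hk1 (by omega) ?_
        rw [Nat.cast_sub (by omega)]; push_cast; linarith
  · have hζ : 0 < Δ * υ * (N : ℝ) := by positivity
    calc ∑ k ∈ (Finset.Icc 1 N).erase (N + 1 - n),
          gfun (Δ * (lam (N + 1) - lam (N + 1 - k)))
        ≤ ∑ k ∈ (Finset.Icc 1 N).erase (N + 1 - n), gfun (Δ * υ * (N : ℝ) * k) :=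
          Finset.sum_le_sum fun k hk => by
            obtain ⟨hk1, hkN, -, hkN'⟩ := hmem hk
            refine hgap.gfun_le hυ hΔ (a := N + 1 - k) (by omega) hk1 (by omega)
              (by positivity) ?_
            rw [Nat.cast_sub (by omega)]; push_cast; linarith
      _ ≤ GintInf 0 (Δ * υ * (N : ℝ)) - gfun (Δ * υ * (N : ℝ) * (N + 1 - n : ℕ)) := by
        rw [Finset.sum_erase_eq_sub hk₀]
        linarith [sum_gfun_mul_le_GintInf hζ N]
      _ ≤ _ := by
        have hpos : 0 < Δ * υ * (N : ℝ) * (N + 1 - n) := mul_pos hζ (by linarith)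
        have hle : Δ * υ * (N : ℝ) * (N + 1 - n) ≤ Δ * υ * (N + 1 - n) * (N + 1) := by
          rw [mul_right_comm]
          exact mul_le_mul_of_nonneg_left (by linarith)
            (mul_pos (mul_pos hΔ hυ) (by linarith)).le
        rw [hk₀_cast]
        linarith [gfun_antitoneOn hpos (hpos.trans_le hle) hle]

lemma theta2_bounds (hgap : HasQuadraticGaps lam υ Υ) (hυ : 0 < υ) (hΥ : 0 < Υ) (hΔ : 0 < Δ)
    {n : ℕ} (hn : 2 ≤ n) :
    Gint 1 2 (Δ * Υ * (2 * (n : ℝ) - 1)) ≤ theta2 lam Δ n ∧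
      theta2 lam Δ n ≤ GintInf 0 (Δ * υ * ((n : ℝ) + 1)) := by
  have hn' : (2 : ℝ) ≤ n := by exact_mod_cast hn
  have hmem {k : ℕ} (hk : k ∈ Finset.Icc 1 (n - 1)) : 1 ≤ k ∧ k + 1 ≤ n := by
    obtain ⟨hk1, hkn⟩ := Finset.mem_Icc.1 hk
    exact ⟨hk1, by omega⟩
  rw [theta2_eq_sum_reflect]
  constructor
  · refine (Gint_one_two_le_sum (by nlinarith [mul_pos hΔ hΥ]) (M := n - 1) (by omega)).trans
      (Finset.sum_le_sum fun k hk => ?_)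
    obtain ⟨hk1, hkn⟩ := hmem hk
    refine hgap.le_gfun hυ hΔ hΥ.le (a := n - k) (by omega) hk1 (by omega) ?_
    have : (1 : ℝ) ≤ k := by exact_mod_cast hk1
    rw [Nat.cast_sub (by omega)]; linarith
  · refine (Finset.sum_le_sum fun k hk => ?_).trans
      (sum_gfun_mul_le_GintInf (by positivity) _)
    obtain ⟨hk1, hkn⟩ := hmem hk
    refine hgap.gfun_le hυ hΔ (a := n - k) (by omega) hk1 (by omega) (by positivity) ?_
    have : (k : ℝ) + 1 ≤ n := by exact_mod_cast hkn
    rw [Nat.cast_sub (by omega)]; linarith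

lemma theta3_bounds (hgap : HasQuadraticGaps lam υ Υ) (hυ : 0 < υ) (hΥ : 0 < Υ) (hΔ : 0 < Δ)
    {N n : ℕ} (hn : 1 ≤ n) (hnN : n + 1 ≤ N) :
    Gint 1 2 (Δ * Υ * ((N : ℝ) + (n : ℝ) + 1)) ≤ theta3 lam Δ N n ∧
      theta3 lam Δ N n ≤ GintInf 0 (Δ * υ * (2 * (n : ℝ) + 1)) := by
  have hmem {k : ℕ} (hk : k ∈ Finset.Icc 1 (N - n)) : 1 ≤ k ∧ (n : ℝ) + k ≤ N := by
    obtain ⟨hk1, hkN⟩ := Finset.mem_Icc.1 hk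
    exact ⟨hk1, by exact_mod_cast (show n + k ≤ N by omega)⟩
  rw [theta3_eq_sum_shift]
  constructor
  · refine (Gint_one_two_le_sum (by positivity) (M := N - n) (by omega)).trans
      (Finset.sum_le_sum fun k hk => ?_)
    obtain ⟨hk1, hkN⟩ := hmem hk
    refine hgap.le_gfun hυ hΔ hΥ.le hn hk1 rfl ?_
    push_cast; linarith
  · refine (Finset.sum_le_sum fun k hk => ?_).trans
      (sum_gfun_mul_le_GintInf (by positivity) _)
    obtain ⟨hk1, -⟩ := hmem hk
    refine hgap.gfun_le hυ hΔ hn hk1 rfl (by positivity) ?_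
    have : (1 : ℝ) ≤ k := by exact_mod_cast hk1
    push_cast; linarith

end QuadraticGaps

theorem stmt13_general (lam : ℕ → ℝ) (υ Υ : ℝ) (hυ : 0 < υ) (hυΥ : υ ≤ Υ)
    (hgap : ∀ n m : ℕ, 1 ≤ n → n ≤ m →
      υ * ((m : ℝ) ^ 2 - (n : ℝ) ^ 2) ≤ lam m - lam n ∧
      lam m - lam n ≤ Υ * ((m : ℝ) ^ 2 - (n : ℝ) ^ 2))
    (Δ : ℝ) (hΔ : 0 < Δ) (N₁ : ℕ) (n : ℕ) (hn1 : 1 ≤ n) (hnN : n ≤ N₁) :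
    -- (i)
    (Gint 1 2 (Δ * Υ * (2 * (N₁ : ℝ) + 1)) -
        gfun (Δ * Υ * ((N₁ : ℝ) + 1 - (n : ℝ)) * (2 * (N₁ : ℝ) + 1)) ≤
      theta1 lam Δ N₁ n ∧
      theta1 lam Δ N₁ n ≤
        GintInf 0 (Δ * υ * (N₁ : ℝ)) -
          gfun (Δ * υ * ((N₁ : ℝ) + 1 - (n : ℝ)) * ((N₁ : ℝ) + 1))) ∧
    -- (ii)
    (2 ≤ n →
      Gint 1 2 (Δ * Υ * (2 * (n : ℝ) - 1)) ≤ theta2 lam Δ n ∧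
      theta2 lam Δ n ≤ GintInf 0 (Δ * υ * ((n : ℝ) + 1))) ∧
    -- (iii)
    (n ≤ N₁ - 1 →
      Gint 1 2 (Δ * Υ * ((N₁ : ℝ) + (n : ℝ) + 1)) ≤ theta3 lam Δ N₁ n ∧
      theta3 lam Δ N₁ n ≤ GintInf 0 (Δ * υ * (2 * (n : ℝ) + 1))) := by
  have hΥ : 0 < Υ := hυ.trans_le hυΥ
  exact ⟨theta1_bounds hgap hυ hΥ hΔ hn1 hnN, fun hn => theta2_bounds hgap hυ hΥ hΔ hn,
    fun hnN' => theta3_bounds hgap hυ hΥ hΔ hn1 (by omega)⟩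

theorem stmt13 (lam : ℕ → ℝ) (υ Υ : ℝ) (hυ : 0 < υ) (hυΥ : υ ≤ Υ)
    (hmono : ∀ n m : ℕ, 1 ≤ n → n < m → lam n < lam m)
    (hgap : ∀ n m : ℕ, 1 ≤ n → n ≤ m →
      υ * ((m : ℝ) ^ 2 - (n : ℝ) ^ 2) ≤ lam m - lam n ∧
      lam m - lam n ≤ Υ * ((m : ℝ) ^ 2 - (n : ℝ) ^ 2))
    (Δ : ℝ) (hΔ : 0 < Δ) (N₁ : ℕ) (hN₁ : 1 ≤ N₁) (n : ℕ) (hn1 : 1 ≤ n) (hnN : n ≤ N₁) :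
    -- (i)
    (Gint 1 2 (Δ * Υ * (2 * (N₁ : ℝ) + 1)) -
        gfun (Δ * Υ * ((N₁ : ℝ) + 1 - (n : ℝ)) * (2 * (N₁ : ℝ) + 1)) ≤
      theta1 lam Δ N₁ n ∧
      theta1 lam Δ N₁ n ≤
        GintInf 0 (Δ * υ * (N₁ : ℝ)) -
          gfun (Δ * υ * ((N₁ : ℝ) + 1 - (n : ℝ)) * ((N₁ : ℝ) + 1))) ∧
    -- (ii)
    (2 ≤ n →
      Gint 1 2 (Δ * Υ * (2 * (n : ℝ) - 1)) ≤ theta2 lam Δ n ∧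
      theta2 lam Δ n ≤ GintInf 0 (Δ * υ * ((n : ℝ) + 1))) ∧
    -- (iii)
    (n ≤ N₁ - 1 →
      Gint 1 2 (Δ * Υ * ((N₁ : ℝ) + (n : ℝ) + 1)) ≤ theta3 lam Δ N₁ n ∧
      theta3 lam Δ N₁ n ≤ GintInf 0 (Δ * υ * (2 * (n : ℝ) + 1))) :=
  stmt13_general lam υ Υ hυ hυΥ hgap Δ hΔ N₁ n hn1 hnN
end

section
/- Fix Δ* > 0. Then: (i) sup{θ¹_{n,Δ,N₁} : 1 ≤ n ≤ N₁, Δ ≥ Δ*} → 0 as N₁ → ∞, and there exists a constant C = C(Δ*) > 0 such that θ²_{n,Δ} ≤ C and θ³_{n,Δ,N₁} ≤ C for all N₁ ∈ ℕ, all n ∈ {1,…,N₁}, and all Δ ≥ Δ*; (ii) there exists C' = C'(Δ*) > 0 with θ¹_{n,Δ,N₁} ≤ C' for all N₁ ∈ ℕ, n ∈ {1,…,N₁}, Δ ≥ Δ*, and each of sup{θ¹_{n,Δ,N₁} : 1 ≤ n ≤ N₁, N₁ ∈ ℕ}, sup{θ²_{n,Δ} : 1 ≤ n ≤ N₁, N₁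 ∈ ℕ}, and sup{θ³_{n,Δ,N₁} : 1 ≤ n ≤ N₁, N₁ ∈ ℕ} tends to 0 as Δ → ∞. -/
open MeasureTheory

/-!
Since `-log (1 - t) ≤ t / (1 - t)`, on `[b, ∞)` the function `g` is dominated by
`e^{-x} / (1 - e^{-b})`. The quadratic gap condition makes every difference in `θ¹`, `θ²`, `θ³`
at least `υ` times a positive integer, with distinct integers for distinct summands (for `θ¹`
even multiples of `N₁ + 2`). So with `q = e^{-Δυ}` and `q* = e^{-Δ*υ}` each `θ` is dominated by
a geometric series: `θ², θ³ ≤ q / (1 - q*)²` and `θ¹ ≤ q^{N₁+2} / (1 - q*)²`.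
-/

open Real Finset Filter Topology

lemma gfun_le_exp_neg_div {b x : ℝ} (hb : 0 < b) (hbx : b ≤ x) :
    gfun x ≤ exp (-x) / (1 - exp (-b)) := by
  have hexp_b : exp (-b) < 1 := exp_lt_one_iff.mpr (by linarith)
  have hexp_le : exp (-x) ≤ exp (-b) := exp_le_exp.mpr (by linarith)
  have hpos : 0 < 1 - exp (-x) := by linarith
  calc gfun x ≤ (1 - exp (-x))⁻¹ - 1 := by
        have := one_sub_inv_le_log_of_pos hpos
        unfold gfun; linarith
    _ = exp (-x) / (1 - exp (-x)) := by field_simp; ring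
    _ ≤ exp (-x) / (1 - exp (-b)) := by gcongr

lemma sum_pow_le_of_injOn {ι : Type*} {s : Finset ι} {f : ι → ℕ} {q : ℝ} {m : ℕ}
    (hq0 : 0 ≤ q) (hq1 : q < 1) (hf : Set.InjOn f s) (hfm : ∀ j ∈ s, m ≤ f j) :
    ∑ j ∈ s, q ^ f j ≤ q ^ m / (1 - q) := by
  have hsub : s.image f ⊆ Ico m (s.sup f + 1) := fun k hk => by
    obtain ⟨j, hj, rfl⟩ := mem_image.mp hk
    exact mem_Ico.mpr ⟨hfm j hj, Nat.lt_succ_of_le (le_sup hj)⟩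
  calc ∑ j ∈ s, q ^ f j = ∑ k ∈ s.image f, q ^ k := (sum_image hf).symm
    _ ≤ ∑ k ∈ Ico m (s.sup f + 1), q ^ k :=
        sum_le_sum_of_subset_of_nonneg hsub fun _ _ _ => pow_nonneg hq0 _
    _ ≤ q ^ m / (1 - q) := geom_sum_Ico_le_of_lt_one hq0 hq1

lemma sum_gfun_le_of_injOn {ι : Type*} {s : Finset ι} {f : ι → ℕ} {y : ι → ℝ} {a b : ℝ}
    {m : ℕ} (hb : 0 < b) (hba : b ≤ a) (hm : 1 ≤ m) (hf : Set.InjOn f s)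
    (hfm : ∀ j ∈ s, m ≤ f j) (hy : ∀ j ∈ s, a * f j ≤ y j) :
    ∑ j ∈ s, gfun (y j) ≤ exp (-a) ^ m / (1 - exp (-b)) ^ 2 := by
  have hexp_b : exp (-b) < 1 := exp_lt_one_iff.mpr (by linarith)
  have hexp_a : exp (-a) ≤ exp (-b) := exp_le_exp.mpr (by linarith)
  have hterm : ∀ j ∈ s, gfun (y j) ≤ exp (-a) ^ f j / (1 - exp (-b)) := fun j hj => by
    have hf1 : (1 : ℝ) ≤ f j := by exact_mod_cast hm.trans (hfm j hj)
    have hay : a ≤ y j := by nlinarith [hy j hj]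
    calc gfun (y j) ≤ exp (-y j) / (1 - exp (-b)) := gfun_le_exp_neg_div hb (hba.trans hay)
      _ ≤ exp (-a) ^ f j / (1 - exp (-b)) := by
        rw [← exp_nat_mul]
        gcongr
        nlinarith [hy j hj]
  calc ∑ j ∈ s, gfun (y j) ≤ (∑ j ∈ s, exp (-a) ^ f j) / (1 - exp (-b)) := by
        rw [sum_div]; exact sum_le_sum hterm
    _ ≤ exp (-a) ^ m / (1 - exp (-a)) / (1 - exp (-b)) := by
        gcongr
        exact sum_pow_le_of_injOn (exp_pos _).le (hexp_a.trans_lt hexp_b) hf hfm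
    _ ≤ exp (-a) ^ m / (1 - exp (-b)) / (1 - exp (-b)) := by gcongr
    _ = exp (-a) ^ m / (1 - exp (-b)) ^ 2 := by rw [div_div, sq]

section Theta

variable {lam : ℕ → ℝ} {υ Δs Δ : ℝ}

lemma theta1_le (hυ : 0 < υ) (hΔs : 0 < Δs) (hΔ : Δs ≤ Δ)
    (hgap : ∀ n m : ℕ, 1 ≤ n → n ≤ m → υ * ((m : ℝ) ^ 2 - (n : ℝ) ^ 2) ≤ lam m - lam n)
    (N₁ n : ℕ) :
    theta1 lam Δ N₁ n ≤ exp (-(Δ * υ)) ^ (N₁ + 2) / (1 - exp (-(Δs * υ))) ^ 2 := by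
  refine sum_gfun_le_of_injOn (f := fun j => (N₁ + 1 - j) * (N₁ + 2)) (by positivity)
    (by gcongr) (by omega) ?_ ?_ ?_
  · intro i hi j hj hij
    simp only [coe_erase, coe_Icc, Set.mem_sdiff, Set.mem_Icc] at hi hj
    have := Nat.eq_of_mul_eq_mul_right (by omega : 0 < N₁ + 2) hij
    omega
  · intro j hj
    simp only [mem_erase, mem_Icc] at hj
    exact Nat.le_mul_of_pos_left _ (by omega)
  · intro j hj
    simp only [mem_erase, mem_Icc] at hj
    have hgj := hgap j (N₁ + 1) hj.2.1 (by omega)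
    have hj1 : (1 : ℝ) ≤ j := by exact_mod_cast hj.2.1
    have hjN : (j : ℝ) ≤ N₁ := by exact_mod_cast hj.2.2
    rw [Nat.cast_mul, Nat.cast_sub (by omega)]
    push_cast at hgj ⊢
    rw [mul_assoc]
    refine mul_le_mul_of_nonneg_left ?_ (hΔs.trans_le hΔ).le
    nlinarith [mul_nonneg (by linarith : (0 : ℝ) ≤ N₁ + 1 - j) (by linarith : (0 : ℝ) ≤ j - 1)]

lemma theta2_le (hυ : 0 < υ) (hΔs : 0 < Δs) (hΔ : Δs ≤ Δ)
    (hgap : ∀ n m : ℕ, 1 ≤ n → n ≤ m → υ * ((m : ℝ) ^ 2 - (n : ℝ) ^ 2) ≤ lam m - lam n)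
    (n : ℕ) :
    theta2 lam Δ n ≤ exp (-(Δ * υ)) / (1 - exp (-(Δs * υ))) ^ 2 := by
  rw [← pow_one (exp _)]
  refine sum_gfun_le_of_injOn (f := fun j => n - j) (by positivity) (by gcongr) le_rfl ?_ ?_ ?_
  · intro i hi j hj hij
    simp only [coe_Icc, Set.mem_Icc] at hi hj
    simp only at hij
    omega
  · intro j hj
    simp only [mem_Icc] at hj
    omega
  · intro j hj
    simp only [mem_Icc] at hj
    have hgj := hgap j n hj.1 (by omega)
    have hj1 : (1 : ℝ) ≤ j := by exact_mod_cast hj.1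
    have hjn : (j : ℝ) ≤ n := by exact_mod_cast (by omega : j ≤ n)
    rw [Nat.cast_sub (by omega), mul_assoc]
    refine mul_le_mul_of_nonneg_left ?_ (hΔs.trans_le hΔ).le
    nlinarith [mul_nonneg (by linarith : (0 : ℝ) ≤ n - j) (by linarith : (0 : ℝ) ≤ n + j - 1)]

lemma theta3_le (hυ : 0 < υ) (hΔs : 0 < Δs) (hΔ : Δs ≤ Δ)
    (hgap : ∀ n m : ℕ, 1 ≤ n → n ≤ m → υ * ((m : ℝ) ^ 2 - (n : ℝ) ^ 2) ≤ lam m - lam n)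
    (N₁ : ℕ) {n : ℕ} (hn : 1 ≤ n) :
    theta3 lam Δ N₁ n ≤ exp (-(Δ * υ)) / (1 - exp (-(Δs * υ))) ^ 2 := by
  rw [← pow_one (exp _)]
  refine sum_gfun_le_of_injOn (f := fun j => j - n) (by positivity) (by gcongr) le_rfl ?_ ?_ ?_
  · intro i hi j hj hij
    simp only [coe_Icc, Set.mem_Icc] at hi hj
    simp only at hij
    omega
  · intro j hj
    simp only [mem_Icc] at hj
    omega
  · intro j hj
    simp only [mem_Icc] at hj
    have hgj := hgap n j hn (by omega)
    have hn1 : (1 : ℝ) ≤ n := by exact_mod_cast hn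
    have hnj : (n : ℝ) ≤ j := by exact_mod_cast (by omega : n ≤ j)
    rw [Nat.cast_sub (by omega), mul_assoc]
    refine mul_le_mul_of_nonneg_left ?_ (hΔs.trans_le hΔ).le
    nlinarith [mul_nonneg (by linarith : (0 : ℝ) ≤ j - n) (by linarith : (0 : ℝ) ≤ j + n - 1)]

end Theta

theorem stmt14_general (lam : ℕ → ℝ) (υ Υ : ℝ) (hυ : 0 < υ)
    (hgap : ∀ n m : ℕ, 1 ≤ n → n ≤ m →
      υ * ((m : ℝ) ^ 2 - (n : ℝ) ^ 2) ≤ lam m - lam n ∧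
      lam m - lam n ≤ Υ * ((m : ℝ) ^ 2 - (n : ℝ) ^ 2))
    (Δs : ℝ) (hΔs : 0 < Δs) :
    -- (i): sup of θ¹ over 1 ≤ n ≤ N₁ and Δ ≥ Δ* tends to 0 as N₁ → ∞
    (∀ δ : ℝ, 0 < δ → ∃ M : ℕ, ∀ N₁ : ℕ, M ≤ N₁ →
      ∀ n : ℕ, 1 ≤ n → n ≤ N₁ → ∀ Δ : ℝ, Δs ≤ Δ →
        theta1 lam Δ N₁ n < δ) ∧
    -- (i): uniform bound C = C(Δ*) on θ² and θ³
    (∃ C : ℝ, 0 < C ∧ ∀ N₁ : ℕ, ∀ n : ℕ, 1 ≤ n → n ≤ N₁ → ∀ Δ : ℝ, Δs ≤ Δ →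
      theta2 lam Δ n ≤ C ∧ theta3 lam Δ N₁ n ≤ C) ∧
    -- (ii): uniform bound C' = C'(Δ*) on θ¹
    (∃ C' : ℝ, 0 < C' ∧ ∀ N₁ : ℕ, ∀ n : ℕ, 1 ≤ n → n ≤ N₁ → ∀ Δ : ℝ, Δs ≤ Δ →
      theta1 lam Δ N₁ n ≤ C') ∧
    -- (ii): each sup over 1 ≤ n ≤ N₁, N₁ ∈ ℕ tends to 0 as Δ → ∞
    (∀ δ : ℝ, 0 < δ → ∃ Δ₀ : ℝ, ∀ Δ : ℝ, Δ₀ ≤ Δ →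
      ∀ N₁ : ℕ, ∀ n : ℕ, 1 ≤ n → n ≤ N₁ →
        theta1 lam Δ N₁ n < δ ∧ theta2 lam Δ n < δ ∧ theta3 lam Δ N₁ n < δ) := by
  have hlow := fun n m hn hnm => (hgap n m hn hnm).1
  set K := (1 - exp (-(Δs * υ))) ^ 2
  have hqs1 : exp (-(Δs * υ)) < 1 := exp_lt_one_iff.mpr (by nlinarith)
  have hK : 0 < K := by positivity
  have hq : ∀ Δ, Δs ≤ Δ → exp (-(Δ * υ)) ≤ exp (-(Δs * υ)) :=
    fun Δ hΔ => by gcongr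
  have hθ1 : ∀ Δ, Δs ≤ Δ → ∀ N₁ n, theta1 lam Δ N₁ n ≤ exp (-(Δ * υ)) / K :=
    fun Δ hΔ N₁ n => (theta1_le hυ hΔs hΔ hlow N₁ n).trans <| by
      gcongr; exact pow_le_of_le_one (exp_pos _).le ((hq Δ hΔ).trans hqs1.le) (by omega)
  refine ⟨fun δ hδ => ?_, ⟨exp (-(Δs * υ)) / K, by positivity, fun N₁ n hn _ Δ hΔ =>
    ⟨(theta2_le hυ hΔs hΔ hlow n).trans (by gcongr),
     (theta3_le hυ hΔs hΔ hlow N₁ hn).trans (by gcongr)⟩⟩,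
    ⟨1 / K, by positivity, fun N₁ n _ _ Δ hΔ =>
      (hθ1 Δ hΔ N₁ n).trans (by gcongr; exact (hq Δ hΔ).trans hqs1.le)⟩, fun δ hδ => ?_⟩
  · have hlim : Tendsto (fun N₁ : ℕ => exp (-(Δs * υ)) ^ (N₁ + 2) / K) atTop (𝓝 0) := by
      simpa using ((tendsto_pow_atTop_nhds_zero_of_lt_one (exp_pos _).le hqs1).comp
        (tendsto_add_atTop_nat 2)).div_const K
    obtain ⟨M, hM⟩ := eventually_atTop.mp (hlim.eventually (gt_mem_nhds hδ))
    refine ⟨M, fun N₁ hN₁ n _ _ Δ hΔ => lt_of_le_of_lt ?_ (hM N₁ hN₁)⟩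
    exact (theta1_le hυ hΔs hΔ hlow N₁ n).trans (by gcongr)
  · have hlim : Tendsto (fun Δ => exp (-(Δ * υ)) / K) atTop (𝓝 0) := by
      simpa using (tendsto_exp_neg_atTop_nhds_zero.comp
        (tendsto_id.atTop_mul_const hυ)).div_const K
    obtain ⟨Δ₁, hΔ₁⟩ := eventually_atTop.mp (hlim.eventually (gt_mem_nhds hδ))
    refine ⟨max Δ₁ Δs, fun Δ hΔ N₁ n hn _ => ?_⟩
    have hΔs' : Δs ≤ Δ := le_of_max_le_right hΔ
    have hsmall := hΔ₁ Δ (le_of_max_le_left hΔ)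
    exact ⟨(hθ1 Δ hΔs' N₁ n).trans_lt hsmall,
      (theta2_le hυ hΔs hΔs' hlow n).trans_lt hsmall,
      (theta3_le hυ hΔs hΔs' hlow N₁ hn).trans_lt hsmall⟩

theorem stmt14 (lam : ℕ → ℝ) (υ Υ : ℝ) (hυ : 0 < υ) (hυΥ : υ ≤ Υ)
    (hmono : ∀ n m : ℕ, 1 ≤ n → n < m → lam n < lam m)
    (hgap : ∀ n m : ℕ, 1 ≤ n → n ≤ m →
      υ * ((m : ℝ) ^ 2 - (n : ℝ) ^ 2) ≤ lam m - lam n ∧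
      lam m - lam n ≤ Υ * ((m : ℝ) ^ 2 - (n : ℝ) ^ 2))
    (Δs : ℝ) (hΔs : 0 < Δs) :
    -- (i): sup of θ¹ over 1 ≤ n ≤ N₁ and Δ ≥ Δ* tends to 0 as N₁ → ∞
    (∀ δ : ℝ, 0 < δ → ∃ M : ℕ, ∀ N₁ : ℕ, M ≤ N₁ →
      ∀ n : ℕ, 1 ≤ n → n ≤ N₁ → ∀ Δ : ℝ, Δs ≤ Δ →
        theta1 lam Δ N₁ n < δ) ∧
    -- (i): uniform bound C = C(Δ*) on θ² and θ³
    (∃ C : ℝ, 0 < C ∧ ∀ N₁ : ℕ, ∀ n : ℕ, 1 ≤ n → n ≤ N₁ → ∀ Δ : ℝ, Δs ≤ Δ →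
      theta2 lam Δ n ≤ C ∧ theta3 lam Δ N₁ n ≤ C) ∧
    -- (ii): uniform bound C' = C'(Δ*) on θ¹
    (∃ C' : ℝ, 0 < C' ∧ ∀ N₁ : ℕ, ∀ n : ℕ, 1 ≤ n → n ≤ N₁ → ∀ Δ : ℝ, Δs ≤ Δ →
      theta1 lam Δ N₁ n ≤ C') ∧
    -- (ii): each sup over 1 ≤ n ≤ N₁, N₁ ∈ ℕ tends to 0 as Δ → ∞
    (∀ δ : ℝ, 0 < δ → ∃ Δ₀ : ℝ, ∀ Δ : ℝ, Δ₀ ≤ Δ →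
      ∀ N₁ : ℕ, ∀ n : ℕ, 1 ≤ n → n ≤ N₁ →
        theta1 lam Δ N₁ n < δ ∧ theta2 lam Δ n < δ ∧ theta3 lam Δ N₁ n < δ) :=
  stmt14_general lam υ Υ hυ hgap Δs hΔs
end
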